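/- arXiv:2510.01541 — 3 statements merged into one kernel-verified Lean document; each statement's English description precedes it below -/
import Mathlib

section
/- Distance-with-varying-speed bound (segmentation lemma, two segments): suppose a continuously differentiable function h : [0, T] → ℝ starts at h(0) = 2Δ with Δ > 0, and satisfies h'(t) ≥ ρ₂ whenever h(t) ∈ [Δ, 2Δ] and h'(t) ≥ ρ₁ whenever h(t) ∈ [0, Δ], where ρ₁ ≤ ρ₂ < 0. If T ≤ -Δ/ρ₂ - Δ/ρ₁, then h(t) ≥ 0 for all t ∈ [0, T]. -/
/-!
If `h` were negative at some time `t₂ ≤ T`, it would have to cross first the band `[Δ, 2Δ]`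
and then the band `[0, Δ]` before `t₂`. On a crossing interval `h` stays inside the band, so
there `h' ≥ ρ` and the mean value theorem makes the crossing last at least `Δ / (-ρ)`. The two
crossings do not overlap, hence `t₂ > -Δ / ρ₂ - Δ / ρ₁ ≥ T`.
-/

open Set

section Crossing

variable {f : ℝ → ℝ} {a b c : ℝ}

lemma isCompact_Icc_inter_preimage_singleton (hf : ContinuousOn f (Icc a b)) (c : ℝ) :
    IsCompact (Icc a b ∩ f ⁻¹' {c}) :=
  isCompact_Icc.of_isClosed_subset
    (hf.preimage_isClosed_of_isClosed isClosed_Icc isClosed_singleton) inter_subset_left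

lemma exists_last_eq_of_le_of_ge (hab : a ≤ b) (hf : ContinuousOn f (Icc a b))
    (ha : c ≤ f a) (hb : f b ≤ c) :
    ∃ s ∈ Icc a b, f s = c ∧ ∀ t ∈ Icc s b, f t ≤ c := by
  set S := Icc a b ∩ f ⁻¹' {c}
  have hS : IsCompact S := isCompact_Icc_inter_preimage_singleton hf c
  have hSne : S.Nonempty := intermediate_value_Icc' hab hf ⟨hb, ha⟩
  obtain ⟨⟨has, hsb⟩, hfs⟩ := hS.sSup_mem hSne
  refine ⟨sSup S, ⟨has, hsb⟩, hfs, fun t ht => ?_⟩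
  by_contra! hlt
  obtain ⟨y, hy, hfy⟩ := intermediate_value_Icc' ht.2
    (hf.mono (Icc_subset_Icc (has.trans ht.1) le_rfl)) ⟨hb, hlt.le⟩
  have hys : y ≤ sSup S := le_csSup hS.bddAbove ⟨⟨has.trans (ht.1.trans hy.1), hy.2⟩, hfy⟩
  rw [le_antisymm (hy.1.trans hys) ht.1, hfs] at hlt
  exact hlt.false

lemma exists_first_eq_of_le_of_ge (hab : a ≤ b) (hf : ContinuousOn f (Icc a b))
    (ha : c ≤ f a) (hb : f b ≤ c) :
    ∃ s ∈ Icc a b, f s = c ∧ ∀ t ∈ Icc a s, c ≤ f t := by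
  set S := Icc a b ∩ f ⁻¹' {c}
  have hS : IsCompact S := isCompact_Icc_inter_preimage_singleton hf c
  have hSne : S.Nonempty := intermediate_value_Icc' hab hf ⟨hb, ha⟩
  obtain ⟨⟨has, hsb⟩, hfs⟩ := hS.sInf_mem hSne
  refine ⟨sInf S, ⟨has, hsb⟩, hfs, fun t ht => ?_⟩
  by_contra! hlt
  obtain ⟨y, hy, hfy⟩ := intermediate_value_Icc' ht.1
    (hf.mono (Icc_subset_Icc le_rfl (ht.2.trans hsb))) ⟨hlt.le, ha⟩
  have hsy : sInf S ≤ y := csInf_le hS.bddBelow ⟨⟨hy.1, hy.2.trans (ht.2.trans hsb)⟩, hfy⟩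
  rw [le_antisymm ht.2 (hsy.trans hy.2), hfs] at hlt
  exact hlt.false

lemma exists_band_crossing {lo hi : ℝ} (hab : a ≤ b) (hf : ContinuousOn f (Icc a b))
    (hlohi : lo ≤ hi) (ha : hi ≤ f a) (hb : f b ≤ lo) :
    ∃ s s', a ≤ s ∧ s ≤ s' ∧ s' ≤ b ∧ f s = hi ∧ f s' = lo ∧ ∀ t ∈ Icc s s', f t ∈ Icc lo hi := by
  obtain ⟨s', ⟨has', hs'b⟩, hfs', habove⟩ :=
    exists_first_eq_of_le_of_ge hab hf (hlohi.trans ha) hb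
  obtain ⟨s, ⟨has, hss'⟩, hfs, hbelow⟩ :=
    exists_last_eq_of_le_of_ge has' (hf.mono (Icc_subset_Icc le_rfl hs'b)) ha (hfs'.trans_le hlohi)
  exact ⟨s, s', has, hss', hs'b, hfs, hfs', fun t ht =>
    ⟨habove t ⟨has.trans ht.1, ht.2⟩, hbelow t ht⟩⟩

end Crossing

lemma mul_sub_le_sub_of_hasDerivAt_of_le {f f' : ℝ → ℝ} {a b C : ℝ} (hab : a ≤ b)
    (hf : ∀ t ∈ Icc a b, HasDerivAt f (f' t) t) (hC : ∀ t ∈ Ioo a b, C ≤ f' t) :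
    C * (b - a) ≤ f b - f a := by
  rcases hab.eq_or_lt with rfl | hlt
  · simp
  obtain ⟨c, hc, hslope⟩ := exists_hasDerivAt_eq_slope f f' hlt
    (fun t ht => (hf t ht).continuousAt.continuousWithinAt)
    (fun t ht => hf t (Ioo_subset_Icc_self ht))
  rw [← le_div_iff₀ (sub_pos.2 hlt), ← hslope]
  exact hC c hc

lemma exists_band_crossing_of_le_deriv {f f' : ℝ → ℝ} {a b lo hi ρ : ℝ} (hab : a ≤ b)
    (hf : ∀ t ∈ Icc a b, HasDerivAt f (f' t) t)
    (hρ : ∀ t ∈ Icc a b, lo ≤ f t → f t ≤ hi → ρ ≤ f' t)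
    (hlohi : lo ≤ hi) (ha : hi ≤ f a) (hb : f b ≤ lo) :
    ∃ s s', a ≤ s ∧ s ≤ s' ∧ s' ≤ b ∧ f s' = lo ∧ hi - lo ≤ ρ * (s - s') := by
  obtain ⟨s, s', has, hss', hs'b, hfs, hfs', hband⟩ :=
    exists_band_crossing hab (fun t ht => (hf t ht).continuousAt.continuousWithinAt) hlohi ha hb
  have hsub : Icc s s' ⊆ Icc a b := Icc_subset_Icc has hs'b
  have hmvt : ρ * (s' - s) ≤ f s' - f s :=
    mul_sub_le_sub_of_hasDerivAt_of_le hss' (fun t ht => hf t (hsub ht)) fun t ht =>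
      let ht' := Ioo_subset_Icc_self ht
      hρ t (hsub ht') (hband t ht').1 (hband t ht').2
  exact ⟨s, s', has, hss', hs'b, hfs', by linarith⟩

open Set in
theorem two_segment_safety_general
    (Δ ρ₁ ρ₂ T : ℝ) (hΔ : 0 < Δ)
    (h12 : ρ₁ ≤ ρ₂) (hρ₂ : ρ₂ < 0)
    (hT : T ≤ -Δ / ρ₂ - Δ / ρ₁)
    (h h' : ℝ → ℝ)
    (hderiv : ∀ t ∈ Icc (0 : ℝ) T, HasDerivAt h (h' t) t)
    (hinit : h 0 = 2 * Δ)
    (hseg2 : ∀ t ∈ Icc (0 : ℝ) T, Δ ≤ h t → h t ≤ 2 * Δ → h' t ≥ ρ₂)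
    (hseg1 : ∀ t ∈ Icc (0 : ℝ) T, 0 ≤ h t → h t ≤ Δ → h' t ≥ ρ₁) :
    ∀ t ∈ Icc (0 : ℝ) T, h t ≥ 0 := by
  intro t₂ ⟨ht₂0, ht₂T⟩
  by_contra! hneg
  have hsub : ∀ {a}, 0 ≤ a → Icc a t₂ ⊆ Icc 0 T := fun ha => Icc_subset_Icc ha ht₂T
  obtain ⟨s₁, s₁', hs₁, hs₁s₁', hs₁'t₂, hhs₁', hcross₁⟩ :=
    exists_band_crossing_of_le_deriv (lo := Δ) (hi := 2 * Δ) ht₂0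
      (fun t ht => hderiv t (hsub le_rfl ht)) (fun t ht => hseg2 t (hsub le_rfl ht))
      (by linarith) hinit.ge (by linarith)
  obtain ⟨s₂, s₂', hs₁'s₂, hs₂s₂', hs₂'t₂, hhs₂', hcross₂⟩ :=
    exists_band_crossing_of_le_deriv (lo := 0) (hi := Δ) hs₁'t₂
      (fun t ht => hderiv t (hsub (hs₁.trans hs₁s₁') ht))
      (fun t ht => hseg1 t (hsub (hs₁.trans hs₁s₁') ht)) hΔ.le hhs₁'.ge hneg.le
  have hs₂'lt : s₂' < t₂ := hs₂'t₂.lt_of_ne (by rintro rfl; linarith)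
  have htime₁ : -Δ / ρ₂ ≤ s₁' - s₁ := by
    rw [div_le_iff_of_neg hρ₂]; linarith
  have htime₂ : -Δ / ρ₁ ≤ s₂' - s₂ := by
    rw [div_le_iff_of_neg (h12.trans_lt hρ₂)]; linarith
  linarith [neg_div ρ₁ Δ]

open Set in
theorem two_segment_safety
    (Δ ρ₁ ρ₂ T : ℝ) (hΔ : 0 < Δ)
    (h12 : ρ₁ ≤ ρ₂) (hρ₂ : ρ₂ < 0)
    (hT0 : 0 ≤ T) (hT : T ≤ -Δ / ρ₂ - Δ / ρ₁)
    (h h' : ℝ → ℝ)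
    (hderiv : ∀ t ∈ Icc (0 : ℝ) T, HasDerivAt h (h' t) t)
    (hcont : ContinuousOn h' (Icc (0 : ℝ) T))
    (hinit : h 0 = 2 * Δ)
    (hseg2 : ∀ t ∈ Icc (0 : ℝ) T, Δ ≤ h t → h t ≤ 2 * Δ → h' t ≥ ρ₂)
    (hseg1 : ∀ t ∈ Icc (0 : ℝ) T, 0 ≤ h t → h t ≤ Δ → h' t ≥ ρ₁) :
    ∀ t ∈ Icc (0 : ℝ) T, h t ≥ 0 :=
  two_segment_safety_general Δ ρ₁ ρ₂ T hΔ h12 hρ₂ hT h h' hderiv hinit hseg2 hseg1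
end

section
/- Additivity of safety degradation bounds over multiple compromised subsystems with arbitrary overlaps: let h be continuously differentiable on [t₀, t_f] with h(t₀) ≥ c, and suppose ḣ(t) = b(t) + Σ_{i=1}^N a_i(t), where b(t) ≥ 0 whenever h(t) ≤ c, a_i(t) ≥ ρ_i (with ρ_i ≤ 0) for t in some interval I_i ⊆ [t₀,t_f] of length at most T_i, and a_i(t) = 0 outside I_i. If c + Σ_i ρ_i T_i ≥ 0, then h(t) ≥ 0 for all t ∈ [t₀, t_f]. -/
/-!
Suppose h(t) < c at some t. Let t₁ be the last time in [t₀, t] with h(t₁) ≥ c; on (t₁, t] we have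
h < c, so the nominal part b of ḣ is nonnegative there. Integrating ḣ over [t₁, t], each compromise
contributes at least ρᵢ times the length of its overlap with [t₁, t], hence at least ρᵢ Tᵢ, whatever
the overlaps between the Iᵢ. Therefore h(t) ≥ h(t₁) + Σ ρᵢ Tᵢ ≥ c + Σ ρᵢ Tᵢ ≥ 0.
-/

open Set MeasureTheory

theorem exists_last_mem_Icc_le {f : ℝ → ℝ} {a b c : ℝ} (hab : a ≤ b)
    (hf : ContinuousOn f (Icc a b)) (ha : c ≤ f a) :
    ∃ t ∈ Icc a b, c ≤ f t ∧ ∀ x ∈ Ioc t b, f x < c := by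
  set S := Icc a b ∩ f ⁻¹' Ici c
  have hS : IsClosed S := hf.preimage_isClosed_of_isClosed isClosed_Icc isClosed_Ici
  have hSne : S.Nonempty := ⟨a, ⟨left_mem_Icc.2 hab, ha⟩⟩
  have hSbdd : BddAbove S := bddAbove_Icc.mono inter_subset_left
  obtain ⟨htmem, htc⟩ := hS.csSup_mem hSne hSbdd
  refine ⟨sSup S, htmem, htc, fun x hx => ?_⟩
  by_contra! hcx
  have : x ≤ sSup S := le_csSup hSbdd ⟨⟨htmem.1.trans hx.1.le, hx.2⟩, hcx⟩
  exact this.not_gt hx.1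

theorem mul_le_intervalIntegral_of_ge_on_of_eq_zero_off {f : ℝ → ℝ} {u v ρ T : ℝ} {I : Set ℝ}
    (huv : u ≤ v) (hf : IntervalIntegrable f volume u v) (hI : MeasurableSet I)
    (hIT : volume I ≤ ENNReal.ofReal T) (hT : 0 ≤ T) (hρ : ρ ≤ 0)
    (hin : ∀ x ∈ I, f x ≥ ρ) (hout : ∀ x ∈ Icc u v, x ∉ I → f x = 0) :
    ρ * T ≤ ∫ x in u..v, f x := by
  set g : ℝ → ℝ := I.indicator fun _ => ρ
  have hg : IntervalIntegrable g volume u v :=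
    (intervalIntegrable_iff_integrableOn_Ioc_of_le huv).2
      ((integrableOn_const measure_Ioc_lt_top.ne).indicator hI)
  have hgf : ∫ x in u..v, g x ≤ ∫ x in u..v, f x := by
    refine intervalIntegral.integral_mono_on huv hg hf fun x hx => ?_
    by_cases hxI : x ∈ I
    · simpa [g, indicator_of_mem hxI] using hin x hxI
    · simp [g, indicator_of_notMem hxI, hout x hx hxI]
  have hg_eq : ∫ x in u..v, g x = ρ * volume.real (Ioc u v ∩ I) := by
    rw [intervalIntegral.integral_of_le huv, setIntegral_indicator hI, setIntegral_const,
      smul_eq_mul, mul_comm]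
  have hvol : volume.real (Ioc u v ∩ I) ≤ T :=
    ENNReal.toReal_le_of_le_ofReal hT ((measure_mono inter_subset_right).trans hIT)
  calc ρ * T ≤ ρ * volume.real (Ioc u v ∩ I) := mul_le_mul_of_nonpos_left hvol hρ
    _ = ∫ x in u..v, g x := hg_eq.symm
    _ ≤ ∫ x in u..v, f x := hgf

theorem sum_le_sub_of_hasDerivAt_eq_add_sum {ι : Type*} [Fintype ι] {f f' b : ℝ → ℝ}
    {a : ι → ℝ → ℝ} {β : ι → ℝ} {u v : ℝ} (huv : u ≤ v)
    (hderiv : ∀ x ∈ Icc u v, HasDerivAt f (f' x) x) (hf' : IntervalIntegrable f' volume u v)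
    (hb_int : IntervalIntegrable b volume u v) (ha_int : ∀ i, IntervalIntegrable (a i) volume u v)
    (hdecomp : ∀ x ∈ Icc u v, f' x = b x + ∑ i, a i x) (hb : ∀ x ∈ Ioc u v, 0 ≤ b x)
    (ha : ∀ i, β i ≤ ∫ x in u..v, a i x) :
    ∑ i, β i ≤ f v - f u := by
  have hsum_int : IntervalIntegrable (fun x => ∑ i, a i x) volume u v := by
    simpa only [Finset.sum_fn] using IntervalIntegrable.sum Finset.univ fun i _ => ha_int i
  have hb_nonneg : 0 ≤ ∫ x in u..v, b x := by
    rw [intervalIntegral.integral_of_le huv]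
    exact setIntegral_nonneg measurableSet_Ioc hb
  calc ∑ i, β i ≤ ∑ i, ∫ x in u..v, a i x := Finset.sum_le_sum fun i _ => ha i
    _ ≤ (∫ x in u..v, b x) + ∫ x in u..v, ∑ i, a i x := by
      rw [intervalIntegral.integral_finsetSum fun i _ => ha_int i]
      linarith
    _ = ∫ x in u..v, f' x := by
      rw [← intervalIntegral.integral_add hb_int hsum_int]
      exact intervalIntegral.integral_congr fun x hx =>
        (hdecomp x (by rwa [uIcc_of_le huv] at hx)).symm
    _ = f v - f u := intervalIntegral.integral_eq_sub_of_hasDerivAt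
      (fun x hx => hderiv x (by rwa [uIcc_of_le huv] at hx)) hf'

theorem additive_degradation_overlapping_general
    (N : ℕ) (c t₀ tf : ℝ) (hc : 0 < c)
    (ρ T s e : Fin N → ℝ)
    (hρ : ∀ i, ρ i ≤ 0) (hT : ∀ i, 0 ≤ T i)
    (hlen : ∀ i, e i - s i ≤ T i)
    (h h' b : ℝ → ℝ) (a : Fin N → ℝ → ℝ)
    (hderiv : ∀ t ∈ Icc t₀ tf, HasDerivAt h (h' t) t)
    (hcont : ContinuousOn h' (Icc t₀ tf))
    (hbint : IntervalIntegrable b MeasureTheory.volume t₀ tf)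
    (haint : ∀ i, IntervalIntegrable (a i) MeasureTheory.volume t₀ tf)
    (hdecomp : ∀ t ∈ Icc t₀ tf, h' t = b t + ∑ i, a i t)
    (hb : ∀ t ∈ Icc t₀ tf, h t ≤ c → b t ≥ 0)
    (ha_in : ∀ i, ∀ t ∈ Icc (s i) (e i), a i t ≥ ρ i)
    (ha_out : ∀ i, ∀ t ∈ Icc t₀ tf, t ∉ Icc (s i) (e i) → a i t = 0)
    (hinit : h t₀ ≥ c)
    (hsafe : c + ∑ i, ρ i * T i ≥ 0) :
    ∀ t ∈ Icc t₀ tf, h t ≥ 0 := by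
  intro t ⟨ht₀t, httf⟩
  rcases le_or_gt c (h t) with hct | hct
  · linarith
  obtain ⟨t₁, ⟨ht₀t₁, ht₁t⟩, hct₁, hlt⟩ := exists_last_mem_Icc_le ht₀t
    (fun x hx => (hderiv x ⟨hx.1, hx.2.trans httf⟩).continuousAt.continuousWithinAt) hinit
  have hsub : Icc t₁ t ⊆ Icc t₀ tf := Icc_subset_Icc ht₀t₁ httf
  have husub : uIcc t₁ t ⊆ uIcc t₀ tf := by
    rw [uIcc_of_le ht₁t, uIcc_of_le (ht₀t.trans httf)]
    exact hsub
  have hdrop := sum_le_sub_of_hasDerivAt_eq_add_sum ht₁t (fun x hx => hderiv x (hsub hx))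
    ((hcont.mono hsub).intervalIntegrable_of_Icc ht₁t) (hbint.mono_set husub)
    (fun i => (haint i).mono_set husub) (fun x hx => hdecomp x (hsub hx))
    (fun x hx => hb x (hsub (Ioc_subset_Icc_self hx)) (hlt x hx).le)
    (fun i => mul_le_intervalIntegral_of_ge_on_of_eq_zero_off ht₁t ((haint i).mono_set husub)
      measurableSet_Icc (by rw [Real.volume_Icc]; exact ENNReal.ofReal_le_ofReal (hlen i)) (hT i)
      (hρ i) (ha_in i) fun x hx => ha_out i x (hsub hx))
  linarith

open Set in
theorem additive_degradation_overlapping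
    (N : ℕ) (hN : 1 ≤ N) (c t₀ tf : ℝ) (hc : 0 < c) (ht : t₀ < tf)
    (ρ T s e : Fin N → ℝ)
    (hρ : ∀ i, ρ i ≤ 0) (hT : ∀ i, 0 ≤ T i)
    (hse : ∀ i, s i ≤ e i) (hs : ∀ i, t₀ ≤ s i) (he : ∀ i, e i ≤ tf)
    (hlen : ∀ i, e i - s i ≤ T i)
    (h h' b : ℝ → ℝ) (a : Fin N → ℝ → ℝ)
    (hderiv : ∀ t ∈ Icc t₀ tf, HasDerivAt h (h' t) t)
    (hcont : ContinuousOn h' (Icc t₀ tf))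
    (hbint : IntervalIntegrable b MeasureTheory.volume t₀ tf)
    (haint : ∀ i, IntervalIntegrable (a i) MeasureTheory.volume t₀ tf)
    (hdecomp : ∀ t ∈ Icc t₀ tf, h' t = b t + ∑ i, a i t)
    (hb : ∀ t ∈ Icc t₀ tf, h t ≤ c → b t ≥ 0)
    (ha_in : ∀ i, ∀ t ∈ Icc (s i) (e i), a i t ≥ ρ i)
    (ha_out : ∀ i, ∀ t ∈ Icc t₀ tf, t ∉ Icc (s i) (e i) → a i t = 0)
    (hinit : h t₀ ≥ c)
    (hsafe : c + ∑ i, ρ i * T i ≥ 0) :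
    ∀ t ∈ Icc t₀ tf, h t ≥ 0 :=
  additive_degradation_overlapping_general N c t₀ tf hc ρ T s e hρ hT hlen h h' b a hderiv hcont
    hbint haint hdecomp hb ha_in ha_out hinit hsafe
end

section
/- Safety across infinitely many attack cycles by induction: suppose there is a sequence of disjoint intervals [t_{0,k}, t_{f,k}] with t_{f,k} + τ ≤ t_{0,k+1}, and a continuously differentiable function h : [t₀, ∞) → ℝ such that (i) h(t_{0,1}) ≥ c, (ii) during each cycle, if h(t_{0,k}) ≥ c then h(t) ≥ 0 for all t ∈ [t_{0,k}, t_{f,k}] and h(t_{f,k}) ≥ 0, (iii) between cycles, ḣ(t) ≥ c/τ whenever h(t) < c, and h(t) ≥ c implies h stays ≥ c thereafter until the next cycle. Then h(t) ≥ 0 for all t ≥ t₀. -/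
/-!
Induction on the cycles shows `c ≤ h (t0 k)` for every `k`: if `h` never reaches `c` on the gap
`[tf k, t0 (k + 1)]`, it climbs there at rate at least `c / τ` for a time at least `τ`, starting
from `h (tf k) ≥ 0`, so it does reach `c`, and once there it stays. Since consecutive cycle starts
are at least `τ` apart, every `t ≥ t0 0` lies in a cycle or in the gap after it.
-/

open Set

theorem mul_sub_le_sub_of_hasDerivAt_ge {f f' : ℝ → ℝ} {a b C : ℝ} (hab : a ≤ b)
    (hf : ∀ x ∈ Icc a b, HasDerivAt f (f' x) x) (hC : ∀ x ∈ Icc a b, C ≤ f' x) :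
    C * (b - a) ≤ f b - f a :=
  (convex_Icc a b).mul_sub_le_image_sub_of_le_deriv
    (fun x hx => (hf x hx).continuousAt.continuousWithinAt)
    (fun x hx => (hf x (interior_subset hx)).differentiableAt.differentiableWithinAt)
    (fun x hx => (hf x (interior_subset hx)).deriv ▸ hC x (interior_subset hx))
    a ⟨le_rfl, hab⟩ b ⟨hab, le_rfl⟩ hab

theorem le_right_of_deriv_ge_while_lt {f f' : ℝ → ℝ} {a b c τ : ℝ} (hc : 0 ≤ c) (hτ : 0 < τ)
    (hab : a + τ ≤ b) (hf : ∀ x ∈ Icc a b, HasDerivAt f (f' x) x) (ha : 0 ≤ f a)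
    (hslope : ∀ x ∈ Icc a b, f x < c → c / τ ≤ f' x)
    (hstay : ∀ s ∈ Icc a b, c ≤ f s → c ≤ f b) :
    c ≤ f b := by
  by_contra! hb
  have hbelow : ∀ x ∈ Icc a b, f x < c := fun x hx =>
    lt_of_not_ge fun hcx => hb.not_ge (hstay x hx hcx)
  have hgrowth := mul_sub_le_sub_of_hasDerivAt_ge (by linarith) hf
    fun x hx => hslope x hx (hbelow x hx)
  have hclimb : c ≤ c / τ * (b - a) :=
    calc c = c / τ * τ := (div_mul_cancel₀ c hτ.ne').symm
      _ ≤ c / τ * (b - a) := by gcongr; linarith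
  linarith

theorem exists_lt_of_add_le_succ {u : ℕ → ℝ} {τ : ℝ} (hτ : 0 < τ)
    (hu : ∀ k, u k + τ ≤ u (k + 1)) (t : ℝ) : ∃ n, t < u n := by
  have hlin : ∀ n : ℕ, u 0 + n * τ ≤ u n := by
    intro n
    induction n with
    | zero => simp
    | succ n ih => push_cast; linarith [hu n]
  obtain ⟨n, hn⟩ := exists_nat_gt ((t - u 0) / τ)
  refine ⟨n, lt_of_lt_of_le ?_ (hlin n)⟩
  linarith [(div_lt_iff₀ hτ).mp hn]

theorem exists_le_lt_succ_of_le_of_lt {α : Type*} [LinearOrder α] (u : ℕ → α) {t : α}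
    (h0 : u 0 ≤ t) {n : ℕ} (hn : t < u n) : ∃ k, u k ≤ t ∧ t < u (k + 1) := by
  induction n with
  | zero => exact absurd h0 hn.not_ge
  | succ n ih =>
    rcases lt_or_ge t (u n) with htn | hnt
    · exact ih htn
    · exact ⟨n, hnt, hn⟩

open Set in
theorem safety_multiple_attack_cycles_general
    (c τ : ℝ) (hc : 0 < c) (hτ : 0 < τ)
    (t0 tf : ℕ → ℝ)
    (hcycle : ∀ k, t0 k < tf k)
    (hgap : ∀ k, tf k + τ ≤ t0 (k + 1))
    (h h' : ℝ → ℝ)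
    (hderiv : ∀ t ∈ Ici (t0 0), HasDerivAt h (h' t) t)
    (hinit : h (t0 0) ≥ c)
    (hcycle_safe : ∀ k, h (t0 k) ≥ c →
      (∀ t ∈ Icc (t0 k) (tf k), h t ≥ 0) ∧ h (tf k) ≥ 0)
    (hbetween_deriv : ∀ k, ∀ t ∈ Icc (tf k) (t0 (k + 1)), h t < c → h' t ≥ c / τ)
    (hstay : ∀ k, ∀ s ∈ Icc (tf k) (t0 (k + 1)), ∀ t ∈ Icc (tf k) (t0 (k + 1)),
      s ≤ t → c ≤ h s → c ≤ h t)
    (hbetween_nonneg : ∀ k, h (tf k) ≥ 0 →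
      ∀ t ∈ Icc (tf k) (t0 (k + 1)), h t ≥ 0) :
    ∀ t ∈ Ici (t0 0), h t ≥ 0 := by
  have hstep : ∀ k, t0 k + τ ≤ t0 (k + 1) := fun k => by linarith [hcycle k, hgap k]
  have hmono : Monotone t0 := monotone_nat_of_le_succ fun k => by linarith [hstep k]
  have hstart : ∀ k, c ≤ h (t0 k) := by
    intro k
    induction k with
    | zero => exact hinit
    | succ k ih =>
      have hend : t0 (k + 1) ∈ Icc (tf k) (t0 (k + 1)) := ⟨by linarith [hgap k], le_rfl⟩
      exact le_right_of_deriv_ge_while_lt hc.le hτ (hgap k)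
        (fun x hx => hderiv x <| mem_Ici.mpr <| by linarith [hmono (Nat.zero_le k), hcycle k, hx.1])
        (hcycle_safe k ih).2 (hbetween_deriv k)
        (fun s hs hcs => hstay k s hs _ hend hs.2 hcs)
  intro t ht
  obtain ⟨n, hn⟩ := exists_lt_of_add_le_succ hτ hstep t
  obtain ⟨k, hkt, htk⟩ := exists_le_lt_succ_of_le_of_lt t0 ht hn
  obtain ⟨hduring, hend⟩ := hcycle_safe k (hstart k)
  rcases le_or_gt t (tf k) with hcyc | hbetween
  · exact hduring t ⟨hkt, hcyc⟩
  · exact hbetween_nonneg k hend t ⟨hbetween.le, htk.le⟩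

open Set in
theorem safety_multiple_attack_cycles
    (c τ : ℝ) (hc : 0 < c) (hτ : 0 < τ)
    (t0 tf : ℕ → ℝ)
    (hcycle : ∀ k, t0 k < tf k)
    (hgap : ∀ k, tf k + τ ≤ t0 (k + 1))
    (h h' : ℝ → ℝ)
    (hderiv : ∀ t ∈ Ici (t0 0), HasDerivAt h (h' t) t)
    (hcont : ContinuousOn h' (Ici (t0 0)))
    (hinit : h (t0 0) ≥ c)
    (hcycle_safe : ∀ k, h (t0 k) ≥ c →
      (∀ t ∈ Icc (t0 k) (tf k), h t ≥ 0) ∧ h (tf k) ≥ 0)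
    (hbetween_deriv : ∀ k, ∀ t ∈ Icc (tf k) (t0 (k + 1)), h t < c → h' t ≥ c / τ)
    (hstay : ∀ k, ∀ s ∈ Icc (tf k) (t0 (k + 1)), ∀ t ∈ Icc (tf k) (t0 (k + 1)),
      s ≤ t → c ≤ h s → c ≤ h t)
    (hbetween_nonneg : ∀ k, h (tf k) ≥ 0 →
      ∀ t ∈ Icc (tf k) (t0 (k + 1)), h t ≥ 0) :
    ∀ t ∈ Ici (t0 0), h t ≥ 0 :=
  safety_multiple_attack_cycles_general c τ hc hτ t0 tf hcycle hgap h h' hderiv hinit hcycle_safe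
    hbetween_deriv hstay hbetween_nonneg
end
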